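/- Let N = (0,0,1) and S = (0,0,−1) in ℝ³, and let x ∈ ℝ³ satisfy ‖x‖ < 1 and (x₁, x₂) ≠ (0,0). Then N, S, x are affinely independent (so there is a unique circle in ℝ³ passing through N, S and x, namely the circumcircle of the triangle N S x in the plane they span), and this circle intersects the open equatorial unit disk {y ∈ ℝ³ : y₃ = 0, y₁² + y₂² < 1} in exactly one point. -/

import Mathlib

open EuclideanGeometry

/-- The north pole `N = (0,0,1)` of the unit sphere in `ℝ³`. -/
noncomputable def ptN : EuclideanSpace ℝ (Fin 3) := !₂[0, 0, 1]

/-- The south pole `S = (0,0,-1)` of the unit sphere in `ℝ³`. -/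
noncomputable def ptS : EuclideanSpace ℝ (Fin 3) := !₂[0, 0, -1]

/-!
The plane through `N`, `S` and `x` is the vertical plane containing the `x₃`-axis and
`u = (x₁, x₂, 0)`, and it meets the equatorial plane in the line `ℝ u`. The circumcenter is
`l • u` with `l = (‖x‖² - 1) / (2 ‖u‖²)`, so `t • u` lies on the circle iff
`‖u‖² t² - (‖x‖² - 1) t = 1`. The two roots of this quadratic have product `-1 / ‖u‖²`, so at
most one of them lies in the open disk `‖u‖² t² < 1`; since `‖x‖ < 1`, the positive root does,
because there `‖u‖² t² = 1 + (‖x‖² - 1) t`.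
-/

section ThreePoints

variable {k V : Type*} [Ring k] [AddCommGroup V] [Module k V]

theorem affineIndependent_fin_three_iff {p₀ p₁ p₂ : V} :
    AffineIndependent k ![p₀, p₁, p₂] ↔
      ∀ a b c : k, a + b + c = 0 → a • p₀ + b • p₁ + c • p₂ = 0 → a = 0 ∧ b = 0 ∧ c = 0 := by
  have hsum (w : Fin 3 → k) (hw : ∑ i, w i = 0) :
      Finset.univ.weightedVSub ![p₀, p₁, p₂] w = w 0 • p₀ + w 1 • p₁ + w 2 • p₂ := by
    rw [Finset.weightedVSub_eq_linear_combination _ hw, Fin.sum_univ_three]; rfl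
  rw [affineIndependent_iff_of_fintype]
  refine ⟨fun h a b c hs hp => ?_, fun h w hs hp => ?_⟩
  · have hs' : ∑ i, ![a, b, c] i = 0 := by simpa [Fin.sum_univ_three] using hs
    have := h ![a, b, c] hs' (by rw [hsum _ hs']; exact hp)
    exact ⟨this 0, this 1, this 2⟩
  · rw [hsum w hs] at hp
    obtain ⟨h0, h1, h2⟩ := h _ _ _ (by simpa [Fin.sum_univ_three] using hs) hp
    intro i; fin_cases i <;> assumption

theorem mem_affineSpan_range_fin_three_iff [Nontrivial k] {p₀ p₁ p₂ y : V} :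
    y ∈ affineSpan k (Set.range ![p₀, p₁, p₂]) ↔
      ∃ a b c : k, a + b + c = 1 ∧ a • p₀ + b • p₁ + c • p₂ = y := by
  have hsum (w : Fin 3 → k) (hw : ∑ i, w i = 1) :
      Finset.univ.affineCombination k ![p₀, p₁, p₂] w = w 0 • p₀ + w 1 • p₁ + w 2 • p₂ := by
    rw [Finset.univ.affineCombination_eq_linear_combination _ _ hw, Fin.sum_univ_three]; rfl
  constructor
  · intro hy
    obtain ⟨w, hw, rfl⟩ := eq_affineCombination_of_mem_affineSpan_of_fintype hy
    exact ⟨w 0, w 1, w 2, by simpa [Fin.sum_univ_three] using hw, (hsum w hw).symm⟩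
  · rintro ⟨a, b, c, habc, rfl⟩
    have hw : ∑ i, ![a, b, c] i = 1 := by simpa [Fin.sum_univ_three] using habc
    simpa [hsum _ hw] using affineCombination_mem_affineSpan hw ![p₀, p₁, p₂]

end ThreePoints

theorem existsUnique_quadratic_root_sq_lt_one {a b : ℝ} (ha : 0 < a) (hb : b < 0) :
    ∃! t : ℝ, a * t ^ 2 - b * t = 1 ∧ a * t ^ 2 < 1 := by
  set s := √(b ^ 2 + 4 * a)
  have hs2 : s ^ 2 = b ^ 2 + 4 * a := Real.sq_sqrt (by positivity)
  have hsb : -b < s := by nlinarith [Real.sqrt_nonneg (b ^ 2 + 4 * a)]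
  set t := (b + s) / (2 * a)
  have ht : a * t ^ 2 - b * t = 1 := by
    simp only [t]; field_simp; linear_combination hs2
  have ht0 : 0 < t := div_pos (by linarith) (by positivity)
  have ht1 : a * t ^ 2 < 1 := by nlinarith
  refine ⟨t, ⟨ht, ht1⟩, fun u ⟨hu, hu1⟩ => ?_⟩
  by_contra hne
  have hprod : a * u * t = -1 := by
    have hsum : a * (u + t) = b :=
      mul_left_cancel₀ (sub_ne_zero.2 hne) (by linear_combination hu - ht)
    linear_combination -hu + u * hsum
  have : a * u ^ 2 * (a * t ^ 2) = 1 := by linear_combination (a * u * t - 1) * hprod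
  exact this.not_lt (mul_lt_one_of_nonneg_of_lt_one_left (by positivity) hu1 ht1.le)

theorem EuclideanSpace.ext_fin_three {y z : EuclideanSpace ℝ (Fin 3)} (h₀ : y 0 = z 0)
    (h₁ : y 1 = z 1) (h₂ : y 2 = z 2) : y = z := by
  ext i; fin_cases i <;> assumption

section Equator

variable (x : EuclideanSpace ℝ (Fin 3))

noncomputable def horizontalPart : EuclideanSpace ℝ (Fin 3) := !₂[x 0, x 1, 0]

theorem sq_add_sq_pos_of_not_on_axis (hx : ¬(x 0 = 0 ∧ x 1 = 0)) : 0 < x 0 ^ 2 + x 1 ^ 2 := by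
  rcases not_and_or.1 hx with h | h <;> positivity

theorem smul_ptN_add_smul_ptS_add_smul (a b c : ℝ) :
    a • ptN + b • ptS + c • x = !₂[c * x 0, c * x 1, a - b + c * x 2] := by
  refine EuclideanSpace.ext_fin_three ?_ ?_ ?_ <;>
    simp only [ptN, ptS, PiLp.add_apply, PiLp.smul_apply, smul_eq_mul, Fin.isValue,
      Matrix.cons_val_zero, Matrix.cons_val_one, Matrix.cons_val] <;>
    ring

theorem affineIndependent_ptN_ptS (hx : ¬(x 0 = 0 ∧ x 1 = 0)) :
    AffineIndependent ℝ ![ptN, ptS, x] := by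
  rw [affineIndependent_fin_three_iff]
  intro a b c habc h
  rw [smul_ptN_add_smul_ptS_add_smul] at h
  have h0 : c * x 0 = 0 := by simpa using congr($h 0)
  have h1 : c * x 1 = 0 := by simpa using congr($h 1)
  have h2 : a - b + c * x 2 = 0 := by simpa using congr($h 2)
  obtain rfl : c = 0 := by
    by_contra hc
    exact hx ⟨(mul_eq_zero.1 h0).resolve_left hc, (mul_eq_zero.1 h1).resolve_left hc⟩
  refine ⟨?_, ?_, rfl⟩ <;> linarith

theorem mem_affineSpan_ptN_ptS_and_eq_zero_iff {y : EuclideanSpace ℝ (Fin 3)} :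
    y ∈ affineSpan ℝ (Set.range ![ptN, ptS, x]) ∧ y 2 = 0 ↔ ∃ t : ℝ, y = t • horizontalPart x := by
  simp only [mem_affineSpan_range_fin_three_iff, smul_ptN_add_smul_ptS_add_smul]
  constructor
  · rintro ⟨⟨a, b, c, -, rfl⟩, h2⟩
    refine ⟨c, ?_⟩
    refine EuclideanSpace.ext_fin_three ?_ ?_ ?_ <;>
      simp only [horizontalPart, PiLp.smul_apply, smul_eq_mul, Fin.isValue,
        Matrix.cons_val_zero, Matrix.cons_val_one, Matrix.cons_val] at h2 ⊢
    linarith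
  · rintro ⟨t, rfl⟩
    refine ⟨⟨(1 - t - t * x 2) / 2, (1 - t + t * x 2) / 2, t, by ring, ?_⟩,
      by simp [horizontalPart]⟩
    refine EuclideanSpace.ext_fin_three ?_ ?_ ?_ <;>
      simp only [horizontalPart, PiLp.smul_apply, smul_eq_mul, Fin.isValue,
        Matrix.cons_val_zero, Matrix.cons_val_one, Matrix.cons_val]
    ring

theorem dist_sq_eq_fin_three (y z : EuclideanSpace ℝ (Fin 3)) :
    dist y z ^ 2 = (y 0 - z 0) ^ 2 + (y 1 - z 1) ^ 2 + (y 2 - z 2) ^ 2 := by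
  simp [EuclideanSpace.dist_sq_eq, Fin.sum_univ_three, Real.dist_eq, sq_abs]

theorem norm_sq_eq_fin_three : ‖x‖ ^ 2 = x 0 ^ 2 + x 1 ^ 2 + x 2 ^ 2 := by
  simp [EuclideanSpace.real_norm_sq_eq, Fin.sum_univ_three]

theorem dist_smul_horizontalPart_sq (s t : ℝ) :
    dist (s • horizontalPart x) (t • horizontalPart x) ^ 2 = (x 0 ^ 2 + x 1 ^ 2) * (s - t) ^ 2 := by
  rw [dist_sq_eq_fin_three]
  simp only [horizontalPart, PiLp.smul_apply, smul_eq_mul, Fin.isValue,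
    Matrix.cons_val_zero, Matrix.cons_val_one, Matrix.cons_val]
  ring

theorem dist_ptN_smul_horizontalPart_sq (t : ℝ) :
    dist ptN (t • horizontalPart x) ^ 2 = (x 0 ^ 2 + x 1 ^ 2) * t ^ 2 + 1 := by
  rw [dist_sq_eq_fin_three]
  simp only [ptN, horizontalPart, PiLp.smul_apply, smul_eq_mul, Fin.isValue,
    Matrix.cons_val_zero, Matrix.cons_val_one, Matrix.cons_val]
  ring

theorem dist_ptS_smul_horizontalPart_sq (t : ℝ) :
    dist ptS (t • horizontalPart x) ^ 2 = (x 0 ^ 2 + x 1 ^ 2) * t ^ 2 + 1 := by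
  rw [dist_sq_eq_fin_three]
  simp only [ptS, horizontalPart, PiLp.smul_apply, smul_eq_mul, Fin.isValue,
    Matrix.cons_val_zero, Matrix.cons_val_one, Matrix.cons_val]
  ring

theorem dist_self_smul_horizontalPart_sq (t : ℝ) :
    dist x (t • horizontalPart x) ^ 2 = ‖x‖ ^ 2 + (x 0 ^ 2 + x 1 ^ 2) * (t ^ 2 - 2 * t) := by
  rw [dist_sq_eq_fin_three, norm_sq_eq_fin_three]
  simp only [horizontalPart, PiLp.smul_apply, smul_eq_mul, Fin.isValue,
    Matrix.cons_val_zero, Matrix.cons_val_one, Matrix.cons_val]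
  ring

theorem circumcenter_ptN_ptS (h : AffineIndependent ℝ ![ptN, ptS, x])
    (hx : ¬(x 0 = 0 ∧ x 1 = 0)) :
    (Affine.Simplex.mk ![ptN, ptS, x] h).circumcenter =
      ((‖x‖ ^ 2 - 1) / (2 * (x 0 ^ 2 + x 1 ^ 2))) • horizontalPart x := by
  have hρ := (sq_add_sq_pos_of_not_on_axis x hx).ne'
  set l := (‖x‖ ^ 2 - 1) / (2 * (x 0 ^ 2 + x 1 ^ 2))
  refine (Affine.Simplex.eq_circumcenter_of_dist_eq _
    ((mem_affineSpan_ptN_ptS_and_eq_zero_iff x).2 ⟨l, rfl⟩).1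
    (r := dist ptN (l • horizontalPart x)) fun i => ?_).symm
  rw [← sq_eq_sq₀ dist_nonneg dist_nonneg]
  fin_cases i
  · rfl
  · exact dist_ptS_smul_horizontalPart_sq x l ▸ (dist_ptN_smul_horizontalPart_sq x l).symm
  · change dist x _ ^ 2 = _
    rw [dist_self_smul_horizontalPart_sq, dist_ptN_smul_horizontalPart_sq]
    linear_combination -mul_div_cancel₀ (‖x‖ ^ 2 - 1) (mul_ne_zero two_ne_zero hρ)

theorem smul_horizontalPart_mem_circumsphere_iff (h : AffineIndependent ℝ ![ptN, ptS, x])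
    (hx : ¬(x 0 = 0 ∧ x 1 = 0)) (t : ℝ) :
    t • horizontalPart x ∈ (Affine.Simplex.mk ![ptN, ptS, x] h).circumsphere ↔
      (x 0 ^ 2 + x 1 ^ 2) * t ^ 2 - (‖x‖ ^ 2 - 1) * t = 1 := by
  rw [mem_sphere, Affine.Simplex.circumsphere_center, Affine.Simplex.circumsphere_radius,
    ← Affine.Simplex.dist_circumcenter_eq_circumradius _ 0, circumcenter_ptN_ptS x h hx,
    ← sq_eq_sq₀ dist_nonneg dist_nonneg]
  change dist _ _ ^ 2 = dist ptN _ ^ 2 ↔ _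
  rw [dist_smul_horizontalPart_sq, dist_ptN_smul_horizontalPart_sq]
  have hl := mul_div_cancel₀ (‖x‖ ^ 2 - 1)
    (mul_ne_zero two_ne_zero (sq_add_sq_pos_of_not_on_axis x hx).ne')
  constructor <;> intro h
  · linear_combination h + t * hl
  · linear_combination h - t * hl

theorem sq_smul_horizontalPart_add_sq (t : ℝ) :
    (t • horizontalPart x) 0 ^ 2 + (t • horizontalPart x) 1 ^ 2 = (x 0 ^ 2 + x 1 ^ 2) * t ^ 2 := by
  simp only [horizontalPart, PiLp.smul_apply, smul_eq_mul, Fin.isValue, Matrix.cons_val_zero,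
    Matrix.cons_val_one]
  ring

end Equator

/-- For a point `x` of the open unit ball of `ℝ³` not on the `x₃`-axis, the points
`N`, `S`, `x` are affinely independent, there is a unique circle through them
(a unique sphere in the plane they span whose center lies in that plane), and this
circle meets the open equatorial unit disk in exactly one point. -/
theorem stmt2 (x : EuclideanSpace ℝ (Fin 3)) (hx : ‖x‖ < 1)
    (hx12 : ¬(x 0 = 0 ∧ x 1 = 0)) :
    ∃ h : AffineIndependent ℝ ![ptN, ptS, x],
      (∃! s : EuclideanGeometry.Sphere (EuclideanSpace ℝ (Fin 3)),
        s.center ∈ affineSpan ℝ (Set.range ![ptN, ptS, x]) ∧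
          ∀ i : Fin 3, ![ptN, ptS, x] i ∈ s) ∧
      (∃! y : EuclideanSpace ℝ (Fin 3),
        (y ∈ (Affine.Simplex.mk ![ptN, ptS, x] h).circumsphere ∧
          y ∈ affineSpan ℝ (Set.range ![ptN, ptS, x])) ∧
        y 2 = 0 ∧ (y 0) ^ 2 + (y 1) ^ 2 < 1) := by
  have h := affineIndependent_ptN_ptS x hx12
  refine ⟨h, ?_, ?_⟩
  · have := h.existsUnique_dist_eq
    simp only [Set.range_subset_iff] at this
    exact this
  have hρ := sq_add_sq_pos_of_not_on_axis x hx12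
  have hb : ‖x‖ ^ 2 - 1 < 0 := by nlinarith [norm_nonneg x]
  obtain ⟨t, ⟨ht, htdisk⟩, huniq⟩ := existsUnique_quadratic_root_sq_lt_one hρ hb
  obtain ⟨htspan, ht2⟩ := (mem_affineSpan_ptN_ptS_and_eq_zero_iff x).2 ⟨t, rfl⟩
  refine ⟨t • horizontalPart x, ⟨⟨(smul_horizontalPart_mem_circumsphere_iff x h hx12 t).2 ht,
    htspan⟩, ht2, by rwa [sq_smul_horizontalPart_add_sq]⟩, ?_⟩
  rintro y ⟨⟨hycirc, hyspan⟩, hy2, hydisk⟩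
  obtain ⟨s, rfl⟩ := (mem_affineSpan_ptN_ptS_and_eq_zero_iff x).1 ⟨hyspan, hy2⟩
  rw [sq_smul_horizontalPart_add_sq] at hydisk
  rw [huniq s ⟨(smul_horizontalPart_mem_circumsphere_iff x h hx12 s).1 hycirc, hydisk⟩]
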